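/- Let p be a prime, S a finite p-group, and X a finite bifree (S,S)-biset with |X|/|S| prime to p that satisfies Frobenius reciprocity. Then: (i) for every P ≤ S and every injective homomorphism φ: P → S, X^{(P,φ)} ≠ ∅ if and only if X^{(φ(P),φ⁻¹)} ≠ ∅ (i.e., Pre-Fix(X) = Pre-Fix(op(X))); (ii) Pre-Fix(X) is level-wise closed; (iii) if φ: P → S and ψ: Q → S are injective homomorphisms with X^{(P,φ)} ≠ ∅, X^{(Q,ψ)} ≠ ∅ and φ(P) = ψ(Q), then |X^{(P,φ)}| = |X^{(Q,ψ)}|; and (iv) if φ, ψ: P → S are injective homomorphisms with X^{(P,φ)} ≠ ∅ and X^{(P,ψ)} ≠ ∅, then |X^{(φ(P),φ⁻¹)}| = |X^{(ψ(P),ψ⁻¹)}|. -/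

import Mathlib

/-! ## Bisets -/

/-- A `(G,H)`-biset structure on a type `X`: a left `H`-action and a right `G`-action
that commute with each other. -/
structure BisetAction (G H : Type*) [Group G] [Group H] (X : Type*) where
  /-- the left `H`-action -/
  smul : H → X → X
  /-- the right `G`-action -/
  rmul : X → G → X
  one_smul : ∀ x, smul 1 x = x
  mul_smul : ∀ h₁ h₂ x, smul (h₁ * h₂) x = smul h₁ (smul h₂ x)
  rmul_one : ∀ x, rmul x 1 = x
  rmul_mul : ∀ x g₁ g₂, rmul x (g₁ * g₂) = rmul (rmul x g₁) g₂
  smul_rmul : ∀ h x g, rmul (smul h x) g = smul h (rmul x g)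

namespace BisetAction

variable {G H K : Type*} [Group G] [Group H] [Group K] {X Y Z : Type*}

lemma smul_smul (A : BisetAction G H X) (h₁ h₂ : H) (x : X) :
    A.smul h₁ (A.smul h₂ x) = A.smul (h₁ * h₂) x := (A.mul_smul h₁ h₂ x).symm

lemma rmul_rmul (A : BisetAction G H X) (x : X) (g₁ g₂ : G) :
    A.rmul (A.rmul x g₁) g₂ = A.rmul x (g₁ * g₂) := (A.rmul_mul x g₁ g₂).symm

/-- The biset is left-free. -/
def LeftFree (A : BisetAction G H X) : Prop := ∀ (h : H) (x : X), A.smul h x = x → h = 1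

/-- The biset is right-free. -/
def RightFree (A : BisetAction G H X) : Prop := ∀ (g : G) (x : X), A.rmul x g = x → g = 1

/-- The biset is bifree: both actions are free. -/
def Bifree (A : BisetAction G H X) : Prop := A.LeftFree ∧ A.RightFree

/-- The fixed-point set `X^{(P,φ)} = {x | x·u = φ(u)·x for all u ∈ P}`. -/
def Fix (A : BisetAction G H X) (P : Subgroup G) (φ : P →* H) : Set X :=
  {x | ∀ u : P, A.rmul x u = A.smul (φ u) x}

/-- The opposite biset: same underlying set, with the two actions reversed
(`g·x·h` in `op A` is `h⁻¹·x·g⁻¹` in `A`). -/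
def op (A : BisetAction G H X) : BisetAction H G X where
  smul g x := A.rmul x g⁻¹
  rmul x h := A.smul h⁻¹ x
  one_smul x := by simpa using A.rmul_one x
  mul_smul g₁ g₂ x := by rw [mul_inv_rev, A.rmul_mul]
  rmul_one x := by simpa using A.one_smul x
  rmul_mul x h₁ h₂ := by rw [mul_inv_rev, A.mul_smul]
  smul_rmul g x h := (A.smul_rmul h⁻¹ x g⁻¹).symm

/-- The setoid of left `H`-orbits. -/
def leftOrbitSetoid (A : BisetAction G H X) : Setoid X where
  r x y := ∃ h : H, y = A.smul h x
  iseqv := by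
    refine ⟨fun x => ⟨1, (A.one_smul x).symm⟩, ?_, ?_⟩
    · rintro x y ⟨h, rfl⟩
      exact ⟨h⁻¹, by rw [A.smul_smul, inv_mul_cancel, A.one_smul]⟩
    · rintro x y z ⟨h₁, rfl⟩ ⟨h₂, rfl⟩
      exact ⟨h₂ * h₁, A.smul_smul h₂ h₁ x⟩

/-- The set of left `H`-orbits of the biset. -/
def leftOrbits (A : BisetAction G H X) : Type _ := Quotient (A.leftOrbitSetoid)

/-- Restricting the right action along a homomorphism `φ : P →* G`. -/
def restrictRight (A : BisetAction G H X) {P : Type*} [Group P] (φ : P →* G) :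
    BisetAction P H X where
  smul := A.smul
  rmul x u := A.rmul x (φ u)
  one_smul := A.one_smul
  mul_smul := A.mul_smul
  rmul_one x := by rw [map_one, A.rmul_one]
  rmul_mul x u₁ u₂ := by rw [map_mul, A.rmul_mul]
  smul_rmul h x u := A.smul_rmul h x (φ u)

/-- Restricting the left action along a homomorphism `φ : P →* H`. -/
def restrictLeft (A : BisetAction G H X) {P : Type*} [Group P] (φ : P →* H) :
    BisetAction G P X where
  smul u x := A.smul (φ u) x
  rmul := A.rmul
  one_smul x := by rw [map_one, A.one_smul]
  mul_smul u₁ u₂ x := by rw [map_mul, A.mul_smul]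
  rmul_one := A.rmul_one
  rmul_mul := A.rmul_mul
  smul_rmul u x g := A.smul_rmul (φ u) x g

end BisetAction

/-- An isomorphism of `(G,H)`-bisets: an equivalence of underlying sets commuting with
both actions. -/
structure BisetIso {G H : Type*} [Group G] [Group H] {X Y : Type*}
    (A : BisetAction G H X) (B : BisetAction G H Y) extends X ≃ Y where
  map_smul : ∀ (h : H) (x : X), toEquiv (A.smul h x) = B.smul h (toEquiv x)
  map_rmul : ∀ (x : X) (g : G), toEquiv (A.rmul x g) = B.rmul (toEquiv x) g
/-! ### The standard bisets `[L,ψ] = H ×_{(L,ψ)} G` -/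

section Std

variable {G H : Type*} [Group G] [Group H]

/-- The setoid on `H × G` generated by `(x·ψ(l), y) ∼ (x, l·y)` for `l ∈ L`. -/
def pairSetoid (L : Subgroup G) (ψ : L →* H) : Setoid (H × G) where
  r a b := ∃ l : L, b.1 = a.1 * ψ l ∧ b.2 = (l : G)⁻¹ * a.2
  iseqv := by
    refine ⟨fun a => ⟨1, by simp⟩, ?_, ?_⟩
    · rintro ⟨a1, a2⟩ ⟨b1, b2⟩ ⟨l, h1, h2⟩
      dsimp only at h1 h2 ⊢
      refine ⟨l⁻¹, ?_, ?_⟩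
      · rw [map_inv, h1, mul_assoc, mul_inv_cancel, mul_one]
      · rw [h2]; simp [mul_assoc]
    · rintro ⟨a1, a2⟩ ⟨b1, b2⟩ ⟨c1, c2⟩ ⟨l, h1, h2⟩ ⟨m, h3, h4⟩
      dsimp only at h1 h2 h3 h4 ⊢
      refine ⟨l * m, ?_, ?_⟩
      · rw [map_mul, h3, h1, mul_assoc]
      · rw [h4, h2]
        simp only [Subgroup.coe_mul, mul_inv_rev, mul_assoc]

/-- The biset `[L,ψ] = H ×_{(L,ψ)} G`: the quotient of `H × G` by the relation
`(x·ψ(l), y) ∼ (x, l·y)` for `l ∈ L`. -/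
def stdBiset (L : Subgroup G) (ψ : L →* H) : Type _ := Quotient (pairSetoid L ψ)

/-- The `(G,H)`-biset structure on `[L,ψ]`: `h·[x,y]·g = [h·x, y·g]`. -/
def stdBisetAction (L : Subgroup G) (ψ : L →* H) : BisetAction G H (stdBiset L ψ) where
  smul h := Quotient.map (fun a => (h * a.1, a.2)) (by
    rintro ⟨a1, a2⟩ ⟨b1, b2⟩ ⟨l, h1, h2⟩
    dsimp only at h1 h2 ⊢
    exact ⟨l, by rw [h1, mul_assoc], h2⟩)
  rmul x g := Quotient.map (fun a => (a.1, a.2 * g)) (by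
    rintro ⟨a1, a2⟩ ⟨b1, b2⟩ ⟨l, h1, h2⟩
    dsimp only at h1 h2 ⊢
    exact ⟨l, h1, by rw [h2, mul_assoc]⟩) x
  one_smul x := by
    refine Quotient.inductionOn x (fun a => ?_)
    exact congrArg (Quotient.mk _) (by dsimp only; rw [one_mul])
  mul_smul h₁ h₂ x := by
    refine Quotient.inductionOn x (fun a => ?_)
    exact congrArg (Quotient.mk _) (by dsimp only; rw [mul_assoc])
  rmul_one x := by
    refine Quotient.inductionOn x (fun a => ?_)
    exact congrArg (Quotient.mk _) (by dsimp only; rw [mul_one])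
  rmul_mul x g₁ g₂ := by
    refine Quotient.inductionOn x (fun a => ?_)
    exact congrArg (Quotient.mk _) (by dsimp only; rw [mul_assoc])
  smul_rmul h x g := by
    refine Quotient.inductionOn x (fun a => ?_)
    rfl

end Std

/-! ### Tensor product (composition) of bisets -/

section Tensor

variable {G H K : Type*} [Group G] [Group H] [Group K] {X Y : Type*}

/-- The setoid on `Y × X` defining `Y ×_H X`, for `X` a `(G,H)`-biset and `Y` an
`(H,K)`-biset: `(y·h, x) ∼ (y, h·x)`. -/
def tensorSetoid (A : BisetAction G H X) (B : BisetAction H K Y) : Setoid (Y × X) where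
  r a b := ∃ h : H, b.1 = B.rmul a.1 h ∧ b.2 = A.smul h⁻¹ a.2
  iseqv := by
    refine ⟨fun a => ⟨1, by rw [B.rmul_one], by rw [inv_one, A.one_smul]⟩, ?_, ?_⟩
    · rintro ⟨y, x⟩ ⟨y', x'⟩ ⟨h, h1, h2⟩
      dsimp only at h1 h2 ⊢
      refine ⟨h⁻¹, ?_, ?_⟩
      · rw [h1, B.rmul_rmul, mul_inv_cancel, B.rmul_one]
      · rw [h2, A.smul_smul, inv_inv, mul_inv_cancel, A.one_smul]
    · rintro ⟨y, x⟩ ⟨y', x'⟩ ⟨y'', x''⟩ ⟨h, h1, h2⟩ ⟨h', h3, h4⟩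
      dsimp only at h1 h2 h3 h4 ⊢
      refine ⟨h * h', ?_, ?_⟩
      · rw [h3, h1, B.rmul_rmul]
      · rw [h4, h2, A.smul_smul, mul_inv_rev]

/-- The composite biset `Y ×_H X`, a `(G,K)`-biset. -/
def tensorBiset (A : BisetAction G H X) (B : BisetAction H K Y) : Type _ :=
  Quotient (tensorSetoid A B)

/-- The `(G,K)`-biset structure on `Y ×_H X`. -/
def tensorAction (A : BisetAction G H X) (B : BisetAction H K Y) :
    BisetAction G K (tensorBiset A B) where
  smul k := Quotient.map (fun a => (B.smul k a.1, a.2)) (by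
    rintro ⟨y, x⟩ ⟨y', x'⟩ ⟨h, h1, h2⟩
    dsimp only at h1 h2 ⊢
    exact ⟨h, by rw [h1, B.smul_rmul], h2⟩)
  rmul z g := Quotient.map (fun a => (a.1, A.rmul a.2 g)) (by
    rintro ⟨y, x⟩ ⟨y', x'⟩ ⟨h, h1, h2⟩
    dsimp only at h1 h2 ⊢
    exact ⟨h, h1, by rw [h2, A.smul_rmul]⟩) z
  one_smul z := by
    refine Quotient.inductionOn z (fun a => ?_)
    exact congrArg (Quotient.mk _) (by dsimp only; rw [B.one_smul])
  mul_smul k₁ k₂ z := by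
    refine Quotient.inductionOn z (fun a => ?_)
    exact congrArg (Quotient.mk _) (by dsimp only; rw [B.mul_smul])
  rmul_one z := by
    refine Quotient.inductionOn z (fun a => ?_)
    exact congrArg (Quotient.mk _) (by dsimp only; rw [A.rmul_one])
  rmul_mul z g₁ g₂ := by
    refine Quotient.inductionOn z (fun a => ?_)
    exact congrArg (Quotient.mk _) (by dsimp only; rw [A.rmul_mul])
  smul_rmul k z g := by
    refine Quotient.inductionOn z (fun a => ?_)
    rfl

end Tensor

/-! ### Products of bisets -/

section Prod

variable {G₁ G₂ H₁ H₂ S : Type*} [Group G₁] [Group G₂] [Group H₁] [Group H₂] [Group S]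
variable {X Y : Type*}

/-- The product of a `(G₁,H₁)`-biset and a `(G₂,H₂)`-biset, a
`(G₁ × G₂, H₁ × H₂)`-biset with coordinatewise actions. -/
def prodAction (A : BisetAction G₁ H₁ X) (B : BisetAction G₂ H₂ Y) :
    BisetAction (G₁ × G₂) (H₁ × H₂) (X × Y) where
  smul h z := (A.smul h.1 z.1, B.smul h.2 z.2)
  rmul z g := (A.rmul z.1 g.1, B.rmul z.2 g.2)
  one_smul z := by simp [A.one_smul, B.one_smul]
  mul_smul h₁ h₂ z := by simp [A.mul_smul, B.mul_smul]
  rmul_one z := by simp [A.rmul_one, B.rmul_one]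
  rmul_mul z g₁ g₂ := by simp [A.rmul_mul, B.rmul_mul]
  smul_rmul h z g := by simp [A.smul_rmul, B.smul_rmul]

/-- `X × Y` endowed with the `(S, H₁ × H₂)`-biset structure
`(b₁,b₂)·(x,y)·a = (b₁·x·a, b₂·y·a)` (the right `S`-action is diagonal). -/
def diagProdAction (A : BisetAction S H₁ X) (B : BisetAction S H₂ Y) :
    BisetAction S (H₁ × H₂) (X × Y) where
  smul h z := (A.smul h.1 z.1, B.smul h.2 z.2)
  rmul z a := (A.rmul z.1 a, B.rmul z.2 a)
  one_smul z := by simp [A.one_smul, B.one_smul]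
  mul_smul h₁ h₂ z := by simp [A.mul_smul, B.mul_smul]
  rmul_one z := by simp [A.rmul_one, B.rmul_one]
  rmul_mul z g₁ g₂ := by simp [A.rmul_mul, B.rmul_mul]
  smul_rmul h z g := by simp [A.smul_rmul, B.smul_rmul]

/-- `X × Y` endowed with the `(S, S × S)`-biset structure
`(b₁,b₂)·(x,y)·a = (b₁·x·b₂⁻¹, b₂·y·a)`, for `(S,S)`-bisets `X` and `Y`. -/
def twistProdAction (A : BisetAction S S X) (B : BisetAction S S Y) :
    BisetAction S (S × S) (X × Y) where
  smul b z := (A.rmul (A.smul b.1 z.1) b.2⁻¹, B.smul b.2 z.2)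
  rmul z a := (z.1, B.rmul z.2 a)
  one_smul z := by simp [A.one_smul, B.one_smul, A.rmul_one]
  mul_smul b c z := by
    simp only [Prod.fst_mul, Prod.snd_mul, Prod.mk.injEq, mul_inv_rev]
    refine ⟨?_, B.mul_smul _ _ _⟩
    rw [A.mul_smul, ← A.rmul_rmul, A.smul_rmul]
  rmul_one z := by simp [B.rmul_one]
  rmul_mul z g₁ g₂ := by simp [B.rmul_mul]
  smul_rmul h z g := by simp [B.smul_rmul]

end Prod

/-- A finite `(S,S)`-biset `X` satisfies Frobenius reciprocity if the `(S,S×S)`-biset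
`X×X` with actions `(b₁,b₂)·(x,y)·a = (b₁·x·a, b₂·y·a)` is isomorphic to the
`(S,S×S)`-biset `X×X` with actions `(b₁,b₂)·(x,y)·a = (b₁·x·b₂⁻¹, b₂·y·a)`
(these model `(X×X)∘[S,Δ]` and `((X×1)∘[S,Δ])∘X` respectively). -/
def FrobeniusRec {S X : Type*} [Group S] (A : BisetAction S S X) : Prop :=
  Nonempty (BisetIso (diagProdAction A A) (twistProdAction A A))

/-! ## Collections of morphisms between subgroups -/

section Collections

variable {S : Type*} [Group S]

/-- The conjugation homomorphism `P →* S`, `u ↦ s * u * s⁻¹`. -/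
def conjHom (s : S) (P : Subgroup S) : P →* S :=
  (MulAut.conj s).toMonoidHom.comp P.subtype

/-- A "collection" of morphism sets on the poset of subgroups of `S`:
for each pair of subgroups `P Q ≤ S` a set of group homomorphisms `P →* S`
(to be thought of as morphisms from `P` to `Q`, i.e. maps landing in `Q`). -/
abbrev Collection (S : Type*) [Group S] :=
  ∀ (P : Subgroup S), Subgroup S → Set (P →* S)

namespace Collection

/-- `P` and `Q` are conjugate in the collection `C` if some morphism of `C`
restricts to an isomorphism from `P` onto `Q`. -/
def IsConj (C : Collection S) (P Q : Subgroup S) : Prop :=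
  ∃ φ ∈ C P Q, MonoidHom.range φ = Q

/-- `P` is fully centralized: its centralizer has maximal order in its conjugacy class. -/
def FullyCentralized (C : Collection S) (P : Subgroup S) : Prop :=
  ∀ Q : Subgroup S, C.IsConj P Q →
    Nat.card (Subgroup.centralizer (Q : Set S)) ≤ Nat.card (Subgroup.centralizer (P : Set S))

/-- `P` is fully normalized: its normalizer has maximal order in its conjugacy class. -/
def FullyNormalized (C : Collection S) (P : Subgroup S) : Prop :=
  ∀ Q : Subgroup S, C.IsConj P Q → Nat.card (Subgroup.normalizer (Q : Set S)) ≤ Nat.card (Subgroup.normalizer (P : Set S))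

end Collection

/-- The set `Aut_S(P)` of automorphisms of `P` induced by conjugation by elements of the
normalizer `N_S(P)`, as a set of homomorphisms `P →* S`. -/
def autSSet (P : Subgroup S) : Set (P →* S) :=
  {φ | ∃ s ∈ Subgroup.normalizer (P : Set S), φ = conjHom s P}

/-- `Aut_S(P)` is a Sylow `p`-subgroup of `Aut_C(P) = C P P`:  `Aut_S(P)` is contained
in `Aut_C(P)`, has `p`-power order, and has index prime to `p` in `Aut_C(P)`. -/
def Collection.AutSIsSylow (p : ℕ) (C : Collection S) (P : Subgroup S) : Prop :=
  autSSet P ⊆ C P P ∧ (∃ n : ℕ, Nat.card (autSSet P) = p ^ n) ∧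
    ∃ k : ℕ, ¬ p ∣ k ∧ Nat.card (C P P) = k * Nat.card (autSSet P)

/-- A collection is level-wise closed if it contains all conjugation maps induced by `S`,
the inverse of every isomorphism it contains, and all composites of composable
isomorphisms it contains. -/
def LevelwiseClosed (C : Collection S) : Prop :=
  (∀ (P Q : Subgroup S) (s : S), (∀ u ∈ P, s * u * s⁻¹ ∈ Q) → conjHom s P ∈ C P Q) ∧
  (∀ (P Q : Subgroup S), ∀ φ ∈ C P Q, MonoidHom.range φ = Q → ∀ ψ : Q →* S,
    (∀ (u : P) (hq : (φ u : S) ∈ Q), ψ ⟨φ u, hq⟩ = u) → ψ ∈ C Q P) ∧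
  (∀ (P Q R : Subgroup S) (φ : P →* S), φ ∈ C P Q → ∀ ψ : Q →* S, ψ ∈ C Q R →
    ∀ hφ : MonoidHom.range φ = Q, MonoidHom.range ψ = R →
    ψ.comp (φ.codRestrict Q (fun u => hφ ▸ show φ u ∈ φ.range from ⟨u, rfl⟩)) ∈ C P R)

end Collections

/-- The pre-fusion collection `Pre-Fix(X)`: morphisms from `P` to `Q` are the injective
homomorphisms `φ : P → Q` with nonempty fixed-point set `X^{(P,φ)}`. -/
def preFixHom {S X : Type*} [Group S] (A : BisetAction S S X) : Collection S :=
  fun P Q => {φ | Function.Injective φ ∧ (∀ u : P, φ u ∈ Q) ∧ (A.Fix P φ).Nonempty}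

/-!
Write `X^{(f,g)} = {x | x·f(t) = g(t)·x for all t}` for families `f, g : T → S`, so that
`X^{(P,φ)}` is the case `f = incl`, `g = φ`. Frobenius reciprocity matches the fixed points of the
twisted diagonal `(f, (g,h))` in its two `(S, S×S)`-bisets on `X × X`, which gives
`|X^{(f,g)}| · |X^{(f,h)}| = |X^{(h,g)}| · |X^{(f,h)}|`. So whenever `X^{(f,h)} ≠ ∅`, `f` may be
replaced by `h`: nonemptiness is transitive, `|X^{(P,φ)}| = |X^{(φ,φ)}| = |X^{(φ(P),incl)}|` gives
(iii), and `|X^{(φ(P),φ⁻¹)}| = |X^{(φ,incl)}| = |X^{(P,incl)}|` gives (iv).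

Symmetry needs an element `x₀` commuting with all of `S`, as it lies in every `X^{(f,f)}`. The
number `|X|/|S|` of left orbits is prime to `p`, so the right action of the `p`-group `S` fixes a
left orbit: `x₀·s = φ(s)·x₀` for a bijection `φ` of `S`, and then
`|X^{(id,id)}| = |X^{(φ,φ)}| = |X^{(id,φ)}| ≠ 0`.
-/

namespace BisetAction

section TwistedFix

variable {G H X : Type*} [Group G] [Group H] (A : BisetAction G H X)

def twistedFix {T : Type*} (f : T → G) (g : T → H) : Set X :=
  {x | ∀ t, A.rmul x (f t) = A.smul (g t) x}

theorem fix_eq_twistedFix (P : Subgroup G) (φ : P →* H) :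
    A.Fix P φ = A.twistedFix (fun u : P => (u : G)) φ := rfl

theorem twistedFix_comp {T T' : Type*} {e : T' → T} (he : Function.Surjective e)
    (f : T → G) (g : T → H) : A.twistedFix (f ∘ e) (g ∘ e) = A.twistedFix f g := by
  ext x
  exact (he.forall (p := fun t => A.rmul x (f t) = A.smul (g t) x)).symm

theorem fix_range_eq_twistedFix {T : Type*} [Group T] (φ : T →* G) (χ : φ.range →* H) :
    A.Fix φ.range χ = A.twistedFix φ (χ ∘ φ.rangeRestrict) :=
  (A.twistedFix_comp φ.rangeRestrict_surjective _ _).symm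

theorem fix_range_eq_twistedFix_of_leftInverse {P : Subgroup H} (φ : P →* G)
    {χ : φ.range →* H} (hχ : ∀ u, χ (φ.rangeRestrict u) = u) :
    A.Fix φ.range χ = A.twistedFix φ (fun u : P => (u : H)) := by
  rw [fix_range_eq_twistedFix]
  exact congrArg _ (funext hχ)

theorem op_twistedFix {T : Type*} (f : T → H) (g : T → G) :
    A.op.twistedFix f g = A.twistedFix (fun t => (g t)⁻¹) (fun t => (f t)⁻¹) := by
  ext x
  exact forall_congr' fun _ => eq_comm

theorem op_fix_eq_twistedFix (P : Subgroup H) (φ : P →* G) :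
    A.op.Fix P φ = A.twistedFix φ (fun u : P => (u : H)) := by
  rw [fix_eq_twistedFix, op_twistedFix, ← A.twistedFix_comp (inv_surjective (G := P))]
  congr 1 <;> funext u <;> simp

theorem eq_rmul_inv_iff {x y : X} {g : G} : x = A.rmul y g⁻¹ ↔ A.rmul x g = y := by
  constructor
  · rintro rfl
    rw [A.rmul_rmul, inv_mul_cancel, A.rmul_one]
  · rintro rfl
    rw [A.rmul_rmul, mul_inv_cancel, A.rmul_one]

theorem smul_mem_twistedFix_conj {T : Type*} {f : T → G} {g : T → H} {x : X}
    (hx : x ∈ A.twistedFix f g) (h : H) :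
    A.smul h x ∈ A.twistedFix f (fun t => h * g t * h⁻¹) := fun t => by
  rw [A.smul_rmul, hx t, A.smul_smul, A.smul_smul, mul_assoc _ h⁻¹, inv_mul_cancel, mul_one]

theorem smul_left_injective (hA : A.LeftFree) (x : X) :
    Function.Injective fun h : H => A.smul h x := fun a b hab => by
  dsimp only at hab
  have : A.smul (b⁻¹ * a) x = x := by
    rw [← A.smul_smul, hab, A.smul_smul, inv_mul_cancel, A.one_smul]
  exact (inv_mul_eq_one.mp (hA _ _ this)).symm

theorem rmul_right_injective (hA : A.RightFree) (x : X) :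
    Function.Injective (A.rmul x) := fun a b hab => by
  have : A.rmul x (a * b⁻¹) = x := by
    rw [A.rmul_mul, hab, A.rmul_rmul, mul_inv_cancel, A.rmul_one]
  exact mul_inv_eq_one.mp (hA _ _ this)

end TwistedFix

section LeftOrbits

variable {G H X : Type*} [Group G] [Group H] (A : BisetAction G H X)

theorem card_eq_card_leftOrbits_mul (hA : A.LeftFree) :
    Nat.card X = Nat.card A.leftOrbits * Nat.card H := by
  rw [← Nat.card_prod]
  refine Nat.card_congr (Equiv.ofBijective (fun w : A.leftOrbits × H => A.smul w.2 w.1.out)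
    ⟨?_, fun x => ?_⟩).symm
  · rintro ⟨ω, h⟩ ⟨ω', h'⟩ hw
    dsimp only at hw
    have hω : ω = ω' := by
      rw [← Quotient.out_eq ω, ← Quotient.out_eq ω']
      exact Quotient.sound ⟨h'⁻¹ * h, by rw [← A.smul_smul, hw, A.smul_smul, inv_mul_cancel,
        A.one_smul]⟩
    subst hω
    rw [A.smul_left_injective hA _ hw]
  · obtain ⟨h, hh⟩ : A.leftOrbitSetoid.r (Quotient.mk _ x : A.leftOrbits).out x :=
      Quotient.exact (Quotient.out_eq _)
    exact ⟨(Quotient.mk _ x, h), hh.symm⟩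

abbrev leftOrbitsMulAction : MulAction G A.leftOrbits where
  smul g := Quotient.map (fun x => A.rmul x g⁻¹) (by
    rintro a b ⟨h, rfl⟩
    exact ⟨h, A.smul_rmul h a g⁻¹⟩)
  one_smul ω := Quotient.inductionOn ω fun x =>
    congrArg (Quotient.mk _) (by dsimp only; rw [inv_one, A.rmul_one])
  mul_smul g₁ g₂ ω := Quotient.inductionOn ω fun x =>
    congrArg (Quotient.mk _) (by dsimp only; rw [mul_inv_rev, A.rmul_rmul])

theorem exists_forall_rmul_eq_smul [Finite H] {p : ℕ} (hp : p.Prime) (hG : IsPGroup p G)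
    (hA : A.LeftFree) (hcard : ¬ p ∣ Nat.card X / Nat.card H) :
    ∃ x₀ : X, ∀ g : G, ∃ h : H, A.rmul x₀ g = A.smul h x₀ := by
  have : Fact p.Prime := ⟨hp⟩
  let _ := A.leftOrbitsMulAction
  have hΩ : ¬ p ∣ Nat.card A.leftOrbits := by
    rwa [A.card_eq_card_leftOrbits_mul hA, Nat.mul_div_cancel _ Nat.card_pos] at hcard
  obtain ⟨ω, hω⟩ := hG.nonempty_fixed_point_of_prime_not_dvd_card A.leftOrbits hΩ
  refine ⟨ω.out, fun g => ?_⟩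
  have hmk : (Quotient.mk _ (A.rmul ω.out g) : A.leftOrbits) = Quotient.mk _ ω.out := by
    have h := hω g⁻¹
    rw [← Quotient.out_eq ω] at h
    change (Quotient.mk _ (A.rmul ω.out g⁻¹⁻¹) : A.leftOrbits) = _ at h
    rwa [inv_inv] at h
  obtain ⟨h, hh⟩ := Quotient.exact hmk
  refine ⟨h⁻¹, ?_⟩
  calc A.rmul ω.out g = A.smul h⁻¹ (A.smul h (A.rmul ω.out g)) := by
        rw [A.smul_smul, inv_mul_cancel, A.one_smul]
    _ = A.smul h⁻¹ ω.out := by rw [← hh]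

end LeftOrbits

theorem _root_.BisetIso.card_twistedFix {G H X Y T : Type*} [Group G] [Group H]
    {A : BisetAction G H X} {B : BisetAction G H Y} (F : BisetIso A B) (f : T → G) (g : T → H) :
    Nat.card (A.twistedFix f g) = Nat.card (B.twistedFix f g) :=
  Nat.card_congr <| F.toEquiv.subtypeEquiv fun x => forall_congr' fun t => by
    rw [← F.map_rmul, ← F.map_smul, F.toEquiv.apply_eq_iff_eq]

section Frobenius

variable {S X T : Type*} [Group S]

theorem twistedFix_diagProdAction {H₁ H₂ Y : Type*} [Group H₁] [Group H₂]
    (A : BisetAction S H₁ X) (B : BisetAction S H₂ Y) (f : T → S) (g : T → H₁) (h : T → H₂) :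
    (diagProdAction A B).twistedFix f (fun t => (g t, h t)) =
      A.twistedFix f g ×ˢ B.twistedFix f h := by
  ext z
  exact (forall_congr' fun _ => Prod.ext_iff).trans forall_and

theorem twistedFix_twistProdAction {Y : Type*} (A : BisetAction S S X) (B : BisetAction S S Y)
    (f g h : T → S) :
    (twistProdAction A B).twistedFix f (fun t => (g t, h t)) =
      A.twistedFix h g ×ˢ B.twistedFix f h := by
  ext z
  exact (forall_congr' fun _ => Prod.ext_iff.trans (and_congr A.eq_rmul_inv_iff Iff.rfl)).trans
    forall_and

variable (A : BisetAction S S X)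

theorem card_twistedFix_mul_card (hfrob : FrobeniusRec A) (f g h : T → S) :
    Nat.card (A.twistedFix f g) * Nat.card (A.twistedFix f h) =
      Nat.card (A.twistedFix h g) * Nat.card (A.twistedFix f h) := by
  obtain ⟨F⟩ := hfrob
  have hF := F.card_twistedFix f (fun t => (g t, h t))
  rwa [twistedFix_diagProdAction, twistedFix_twistProdAction, Nat.card_congr (Equiv.Set.prod _ _),
    Nat.card_congr (Equiv.Set.prod _ _), Nat.card_prod, Nat.card_prod] at hF

theorem twistedFix_id_subset (f : T → S) : A.twistedFix (id : S → S) id ⊆ A.twistedFix f f :=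
  fun _ hx t => hx (f t)

variable [Finite X]

theorem card_twistedFix_eq_of_nonempty (hfrob : FrobeniusRec A) {f h : T → S}
    (hfh : (A.twistedFix f h).Nonempty) (g : T → S) :
    Nat.card (A.twistedFix f g) = Nat.card (A.twistedFix h g) :=
  Nat.eq_of_mul_eq_mul_right ((Set.natCard_pos (Set.toFinite _)).2 hfh)
    (A.card_twistedFix_mul_card hfrob f g h)

theorem twistedFix_nonempty_iff_of_nonempty (hfrob : FrobeniusRec A) {f h : T → S}
    (hfh : (A.twistedFix f h).Nonempty) (g : T → S) :
    (A.twistedFix f g).Nonempty ↔ (A.twistedFix h g).Nonempty := by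
  rw [← Set.natCard_pos (Set.toFinite _), ← Set.natCard_pos (Set.toFinite _),
    A.card_twistedFix_eq_of_nonempty hfrob hfh]

theorem twistedFix_nonempty_trans (hfrob : FrobeniusRec A) {f g h : T → S}
    (hfh : (A.twistedFix f h).Nonempty) (hhg : (A.twistedFix h g).Nonempty) :
    (A.twistedFix f g).Nonempty :=
  (A.twistedFix_nonempty_iff_of_nonempty hfrob hfh g).2 hhg

theorem twistedFix_nonempty_comm (hfrob : FrobeniusRec A)
    (h0 : (A.twistedFix (id : S → S) id).Nonempty) {f g : T → S} :
    (A.twistedFix f g).Nonempty ↔ (A.twistedFix g f).Nonempty :=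
  have symm {f g : T → S} (hfg : (A.twistedFix f g).Nonempty) : (A.twistedFix g f).Nonempty :=
    (A.twistedFix_nonempty_iff_of_nonempty hfrob hfg f).1 (h0.mono (A.twistedFix_id_subset f))
  ⟨symm, symm⟩

theorem twistedFix_id_nonempty [Finite S] {p : ℕ} (hp : p.Prime) (hS : IsPGroup p S)
    (hA : A.Bifree) (hcard : ¬ p ∣ Nat.card X / Nat.card S) (hfrob : FrobeniusRec A) :
    (A.twistedFix (id : S → S) id).Nonempty := by
  obtain ⟨x₀, hx₀⟩ := A.exists_forall_rmul_eq_smul hp hS hA.1 hcard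
  choose φ hφ using hx₀
  have hφ_surj : Function.Surjective φ := Finite.injective_iff_surjective.mp fun s t hst =>
    A.rmul_right_injective hA.2 x₀ (by rw [hφ, hφ, hst])
  have hne : (A.twistedFix id φ).Nonempty := ⟨x₀, hφ⟩
  rw [← A.twistedFix_comp hφ_surj]
  exact (A.twistedFix_nonempty_iff_of_nonempty hfrob hne φ).1 hne

end Frobenius

section PreFix

variable {S X : Type*} [Group S] [Finite X] (A : BisetAction S S X)

theorem fix_nonempty_iff_fix_range_nonempty (hfrob : FrobeniusRec A)
    (h0 : (A.twistedFix (id : S → S) id).Nonempty) {P : Subgroup S} (φ : P →* S)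
    {χ : φ.range →* S} (hχ : ∀ u, χ (φ.rangeRestrict u) = u) :
    (A.Fix P φ).Nonempty ↔ (A.Fix φ.range χ).Nonempty := by
  rw [A.fix_range_eq_twistedFix_of_leftInverse φ hχ]
  exact A.twistedFix_nonempty_comm hfrob h0

theorem preFixHom_op (hfrob : FrobeniusRec A) (h0 : (A.twistedFix (id : S → S) id).Nonempty) :
    preFixHom A.op = preFixHom A := by
  funext P Q
  ext φ
  refine and_congr_right fun _ => and_congr_right fun _ => ?_
  rw [op_fix_eq_twistedFix, fix_eq_twistedFix, A.twistedFix_nonempty_comm hfrob h0]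

theorem levelwiseClosed_preFixHom (hfrob : FrobeniusRec A)
    (h0 : (A.twistedFix (id : S → S) id).Nonempty) : LevelwiseClosed (preFixHom A) := by
  refine ⟨fun P Q s hs => ?_, fun P Q φ hφ hrange ψ hψ => ?_,
    fun P Q R φ hφ ψ hψ hrange _ => ?_⟩
  · obtain ⟨x₀, hx₀⟩ := h0
    exact ⟨(MulAut.conj s).injective.comp Subtype.val_injective, fun u => hs u u.2,
      A.smul s x₀, A.smul_mem_twistedFix_conj (A.twistedFix_id_subset _ hx₀) s⟩
  · subst hrange
    have hψφ (u : P) : ψ (φ.rangeRestrict u) = u := hψ u ⟨u, rfl⟩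
    refine ⟨(funext hψφ ▸ Subtype.val_injective).of_comp_right φ.rangeRestrict_surjective,
      φ.rangeRestrict_surjective.forall.2 fun u => (hψφ u).symm ▸ u.2, ?_⟩
    exact (A.fix_nonempty_iff_fix_range_nonempty hfrob h0 φ hψφ).1 hφ.2.2
  · subst hrange
    refine ⟨hψ.1.comp fun u v huv => hφ.1 (congrArg Subtype.val huv), fun u => hψ.2.1 _, ?_⟩
    have hψ' := hψ.2.2
    rw [fix_range_eq_twistedFix] at hψ'
    exact A.twistedFix_nonempty_trans hfrob hφ.2.2 hψ'

theorem card_fix_eq_card_fix_range (hfrob : FrobeniusRec A) {P : Subgroup S} {φ : P →* S}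
    (hne : (A.Fix P φ).Nonempty) :
    Nat.card (A.Fix P φ) = Nat.card (A.Fix φ.range φ.range.subtype) := by
  rw [fix_range_eq_twistedFix]
  exact A.card_twistedFix_eq_of_nonempty hfrob hne φ

theorem card_fix_range_eq_card_fix (hfrob : FrobeniusRec A) {P : Subgroup S} {φ : P →* S}
    (hne : (A.Fix P φ).Nonempty) {χ : φ.range →* S} (hχ : ∀ u, χ (φ.rangeRestrict u) = u) :
    Nat.card (A.Fix φ.range χ) = Nat.card (A.Fix P P.subtype) := by
  rw [A.fix_range_eq_twistedFix_of_leftInverse φ hχ]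
  exact (A.card_twistedFix_eq_of_nonempty hfrob hne _).symm

end PreFix

end BisetAction

/-- Let `S` be a finite `p`-group and `X` a finite bifree `(S,S)`-biset
with `|X|/|S|` prime to `p`, satisfying Frobenius reciprocity.  Then:
(i) `X^{(P,φ)} ≠ ∅ ↔ X^{(φ(P),φ⁻¹)} ≠ ∅` for every injective `φ : P → S`, i.e.
    `Pre-Fix(X) = Pre-Fix(op X)`;
(ii) `Pre-Fix(X)` is level-wise closed;
(iii) if `φ : P → S` and `ψ : Q → S` are injective with nonempty fixed-point sets and
      `φ(P) = ψ(Q)`, then `|X^{(P,φ)}| = |X^{(Q,ψ)}|`;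
(iv) if `φ, ψ : P → S` are injective with nonempty fixed-point sets, then
     `|X^{(φ(P),φ⁻¹)}| = |X^{(ψ(P),ψ⁻¹)}|`. -/
theorem frobeniusRec_preFix_properties
    (p : ℕ) (hp : p.Prime) (S : Type*) [Group S] [Finite S] (hS : IsPGroup p S)
    (X : Type*) [Finite X] (A : BisetAction S S X) (hA : A.Bifree)
    (hcard : ¬ p ∣ Nat.card X / Nat.card S) (hfrob : FrobeniusRec A) :
    (∀ (P : Subgroup S) (φ : P →* S), Function.Injective φ →
      ∀ χ : φ.range →* S, (∀ u : P, χ ⟨φ u, ⟨u, rfl⟩⟩ = (u : S)) →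
      ((A.Fix P φ).Nonempty ↔ (A.Fix φ.range χ).Nonempty)) ∧
    (∀ P Q : Subgroup S, preFixHom A P Q = preFixHom A.op P Q) ∧
    LevelwiseClosed (preFixHom A) ∧
    (∀ (P Q : Subgroup S) (φ : P →* S) (ψ : Q →* S),
      Function.Injective φ → Function.Injective ψ →
      (A.Fix P φ).Nonempty → (A.Fix Q ψ).Nonempty →
      MonoidHom.range φ = MonoidHom.range ψ →
      Nat.card (A.Fix P φ) = Nat.card (A.Fix Q ψ)) ∧
    (∀ (P : Subgroup S) (φ ψ : P →* S),
      Function.Injective φ → Function.Injective ψ →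
      (A.Fix P φ).Nonempty → (A.Fix P ψ).Nonempty →
      ∀ (χφ : φ.range →* S) (χψ : ψ.range →* S),
        (∀ u : P, χφ ⟨φ u, ⟨u, rfl⟩⟩ = (u : S)) →
        (∀ u : P, χψ ⟨ψ u, ⟨u, rfl⟩⟩ = (u : S)) →
        Nat.card (A.Fix φ.range χφ) = Nat.card (A.Fix ψ.range χψ)) := by
  have h0 := A.twistedFix_id_nonempty hp hS hA hcard hfrob
  refine ⟨fun P φ _ χ hχ => A.fix_nonempty_iff_fix_range_nonempty hfrob h0 φ hχ,
    fun P Q => by rw [A.preFixHom_op hfrob h0], A.levelwiseClosed_preFixHom hfrob h0,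
    fun P Q φ ψ _ _ hφ hψ hrange => ?_, fun P φ ψ _ _ hφ hψ χφ χψ hχφ hχψ => ?_⟩
  · rw [A.card_fix_eq_card_fix_range hfrob hφ, A.card_fix_eq_card_fix_range hfrob hψ, hrange]
  · rw [A.card_fix_range_eq_card_fix hfrob hφ hχφ, A.card_fix_range_eq_card_fix hfrob hψ hχψ]
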